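/- arXiv:0801.1884 — 3 statements merged into one kernel-verified Lean document; each statement's English description precedes it below -/
import Mathlib

section
/- Let a ∈ (0,1), b > 0 with a + b > 1, and let C₁, C₂ > 0. If h : [0,∞) → [0,∞) is locally bounded (bounded on compact intervals) and satisfies h(t) ≤ C₁(1+t) + C₂ ∫₀ᵗ (t-τ)^(-a) (1+τ)^(-b) h(τ) dτ for all t ≥ 0, then there exists C > 0 independent of t such that h(t) ≤ C(1+t) for all t ≥ 0. -/
open MeasureTheory Set

theorem aux_intg' (c t : ℝ) (hc : -1 < c) (ht : 0 ≤ t) :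
    IntegrableOn (fun s => (t - s) ^ c) (Ioo (0:ℝ) t) volume := by
  have h1 : IntervalIntegrable (fun x : ℝ => x ^ c) volume 0 t :=
    intervalIntegral.intervalIntegrable_rpow' hc
  have h2 := (h1.comp_sub_left t).symm
  simp only [sub_self, sub_zero] at h2
  exact (intervalIntegrable_iff_integrableOn_Ioo_of_le ht).mp h2

theorem aux_int' (c t : ℝ) (hc : -1 < c) (ht : 0 ≤ t) :
    ∫ s in Ioo (0:ℝ) t, (t - s) ^ c = t ^ (c+1) / (c+1) := by
  rw [← integral_Ioc_eq_integral_Ioo, ← intervalIntegral.integral_of_le ht,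
    intervalIntegral.integral_comp_sub_left (fun x => x ^ c) t]
  simp only [sub_self, sub_zero]
  rw [integral_rpow (Or.inl hc), Real.zero_rpow (by linarith)]
  ring

theorem gronwall_singular_supercritical
    (a b C₁ C₂ : ℝ) (ha : 0 < a) (ha1 : a < 1) (hb : 0 < b) (hab : 1 < a + b)
    (hC₁ : 0 < C₁) (hC₂ : 0 < C₂) (h : ℝ → ℝ)
    (hmeas : Measurable h)
    (hnonneg : ∀ t, 0 ≤ t → 0 ≤ h t)
    (hloc : ∀ T : ℝ, 0 < T → ∃ M : ℝ, ∀ t ∈ Icc (0:ℝ) T, h t ≤ M)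
    (hineq : ∀ t : ℝ, 0 ≤ t →
      h t ≤ C₁ * (1 + t) +
        C₂ * ∫ τ in Ioo (0:ℝ) t, (t - τ) ^ (-a) * (1 + τ) ^ (-b) * h τ) :
    ∃ C : ℝ, 0 < C ∧ ∀ t : ℝ, 0 ≤ t → h t ≤ C * (1 + t) := by
  set b' : ℝ := min b 1 with hb'def
  have hb'pos : 0 < b' := lt_min hb zero_lt_one
  have hb'le1 : b' ≤ 1 := min_le_right _ _
  have hb'leb : b' ≤ b := min_le_left _ _
  have hab' : 1 < a + b' := by
    rcases le_total b 1 with h1 | h1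
    · rw [hb'def, min_eq_left h1]; exact hab
    · rw [hb'def, min_eq_right h1]; linarith
  have h1a : (0:ℝ) < 1 - a := by linarith
  -- choose T such that for t ≥ T the kernel mass is small
  have htend : Filter.Tendsto (fun t : ℝ => C₂ / (1 - a) * (1 + t) ^ (1 - a - b'))
      Filter.atTop (nhds 0) := by
    have h0 : Filter.Tendsto (fun t : ℝ => (1 + t)) Filter.atTop Filter.atTop :=
      Filter.tendsto_atTop_add_const_left _ 1 Filter.tendsto_id
    have h1 : Filter.Tendsto (fun x : ℝ => x ^ (1 - a - b')) Filter.atTop (nhds 0) := by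
      have h2 := tendsto_rpow_neg_atTop (y := a + b' - 1) (by linarith)
      convert h2 using 2 with x
      ring_nf
    have h3 := (h1.comp h0).const_mul (C₂ / (1 - a))
    simpa [mul_zero, Function.comp] using h3
  obtain ⟨T, hT⟩ : ∃ T : ℝ, ∀ t ≥ T, C₂ / (1 - a) * (1 + t) ^ (1 - a - b') ≤ 1 / 2 :=
    Filter.eventually_atTop.mp
      (htend.eventually_le_const (show (0:ℝ) < 1/2 by norm_num))
  set T₁ : ℝ := max T 1 with hT₁def
  have hT₁pos : (0:ℝ) < T₁ := lt_of_lt_of_le zero_lt_one (le_max_right _ _)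
  obtain ⟨M, hM⟩ := hloc T₁ hT₁pos
  set M' : ℝ := max M 0 with hM'def
  set C : ℝ := max M' (2 * C₁) with hCdef
  have hCpos : 0 < C := lt_of_lt_of_le (by linarith) (le_max_right _ _)
  refine ⟨C, hCpos, fun t₀ ht₀ => ?_⟩
  rcases le_or_gt t₀ T₁ with hcase | hcase
  · have h1 : h t₀ ≤ M' := le_trans (hM t₀ ⟨ht₀, hcase⟩) (le_max_left _ _)
    have h2 : M' ≤ C := le_max_left _ _
    nlinarith [hnonneg t₀ ht₀]
  · -- t₀ > T₁
    obtain ⟨M₀, hM₀⟩ := hloc t₀ (lt_trans hT₁pos hcase)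
    set S : Set ℝ := (fun τ => h τ / (1 + τ)) '' Icc 0 t₀ with hSdef
    have h0mem : (0:ℝ) ∈ Icc (0:ℝ) t₀ := ⟨le_refl _, ht₀⟩
    have hSne : S.Nonempty := ⟨h 0 / (1 + 0), ⟨0, h0mem, rfl⟩⟩
    have hSbdd : BddAbove S := by
      refine ⟨max M₀ 0, fun x hx => ?_⟩
      obtain ⟨τ, hτ, rfl⟩ := hx
      have h1τ : (1:ℝ) ≤ 1 + τ := by linarith [hτ.1]
      exact le_trans (div_le_self (hnonneg τ hτ.1) h1τ)
        (le_trans (hM₀ τ hτ) (le_max_left _ _))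
    set K : ℝ := sSup S with hKdef
    have hKb : ∀ s ∈ Icc (0:ℝ) t₀, h s ≤ K * (1 + s) := by
      intro s hs
      have h1s : (0:ℝ) < 1 + s := by linarith [hs.1]
      have hle := le_csSup hSbdd (⟨s, hs, rfl⟩ : h s / (1 + s) ∈ S)
      calc h s = h s / (1 + s) * (1 + s) := by field_simp
        _ ≤ K * (1 + s) := mul_le_mul_of_nonneg_right hle (le_of_lt h1s)
    have hK0 : 0 ≤ K := by
      have h0 : 0 ≤ h 0 / (1 + 0) := by
        have := hnonneg 0 (le_refl 0); positivity
      exact le_trans h0 (le_csSup hSbdd ⟨0, h0mem, rfl⟩)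
    -- the key self-improving estimate
    have hKey : K ≤ max M' (C₁ + K / 2) := by
      apply csSup_le hSne
      intro x hx
      obtain ⟨τ, hτ, rfl⟩ := hx
      have h1τ : (0:ℝ) < 1 + τ := by linarith [hτ.1]
      rcases le_or_gt τ T₁ with hτc | hτc
      · -- small τ: local bound
        refine le_trans ?_ (le_max_left _ _)
        exact le_trans (div_le_self (hnonneg τ hτ.1) (by linarith [hτ.1]))
          (le_trans (hM τ ⟨hτ.1, hτc⟩) (le_max_left _ _))
      · -- large τ: integral inequality
        refine le_trans ?_ (le_max_right _ _)
        have hτpos : (0:ℝ) < τ := lt_trans hT₁pos hτc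
        have hτT : T ≤ τ := le_trans (le_max_left _ _) (le_of_lt hτc)
        -- pointwise bound on the integrand
        have hbound : ∀ s ∈ Ioo (0:ℝ) τ,
            (τ - s) ^ (-a) * (1 + s) ^ (-b) * h s ≤
              K * (1 + τ) ^ (1 - b') * (τ - s) ^ (-a) := by
          intro s hs
          have hs0 : 0 < s := hs.1
          have hsτ : s < τ := hs.2
          have h1s : (0:ℝ) < 1 + s := by linarith
          have hτs : (0:ℝ) ≤ (τ - s) ^ (-a) := Real.rpow_nonneg (by linarith) _
          have hbs : (0:ℝ) ≤ (1 + s) ^ (-b) := Real.rpow_nonneg h1s.le _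
          have hks : h s ≤ K * (1 + s) :=
            hKb s ⟨hs0.le, le_trans hsτ.le hτ.2⟩
          have e1 : (1 + s) ^ (-b) * (1 + s) = (1 + s) ^ (1 - b) := by
            rw [show (1:ℝ) - b = -b + 1 by ring, Real.rpow_add h1s, Real.rpow_one]
          have e2 : (1 + s) ^ (1 - b) ≤ (1 + s) ^ (1 - b') :=
            Real.rpow_le_rpow_of_exponent_le (by linarith) (by linarith)
          have e3 : (1 + s) ^ (1 - b') ≤ (1 + τ) ^ (1 - b') :=
            Real.rpow_le_rpow h1s.le (by linarith) (by linarith)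
          calc (τ - s) ^ (-a) * (1 + s) ^ (-b) * h s
              ≤ (τ - s) ^ (-a) * (1 + s) ^ (-b) * (K * (1 + s)) := by
                exact mul_le_mul_of_nonneg_left hks (mul_nonneg hτs hbs)
            _ = K * ((1 + s) ^ (-b) * (1 + s)) * (τ - s) ^ (-a) := by ring
            _ = K * (1 + s) ^ (1 - b) * (τ - s) ^ (-a) := by rw [e1]
            _ ≤ K * (1 + τ) ^ (1 - b') * (τ - s) ^ (-a) := by
                exact mul_le_mul_of_nonneg_right
                  (mul_le_mul_of_nonneg_left (le_trans e2 e3) hK0) hτs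
        -- integrability
        have hg_int : IntegrableOn
            (fun s => K * (1 + τ) ^ (1 - b') * (τ - s) ^ (-a)) (Ioo (0:ℝ) τ) volume :=
          (aux_intg' (-a) τ (by linarith) hτpos.le).const_mul _
        have hf_meas : AEStronglyMeasurable
            (fun s => (τ - s) ^ (-a) * (1 + s) ^ (-b) * h s)
            (volume.restrict (Ioo (0:ℝ) τ)) := by
          apply Measurable.aestronglyMeasurable
          fun_prop
        have hf_int : IntegrableOn
            (fun s => (τ - s) ^ (-a) * (1 + s) ^ (-b) * h s) (Ioo (0:ℝ) τ) volume := by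
          apply Integrable.mono' hg_int hf_meas
          filter_upwards [ae_restrict_mem measurableSet_Ioo] with s hs
          have hs0 : 0 < s := hs.1
          have hnn : 0 ≤ (τ - s) ^ (-a) * (1 + s) ^ (-b) * h s :=
            mul_nonneg (mul_nonneg (Real.rpow_nonneg (by linarith [hs.2]) _)
              (Real.rpow_nonneg (by linarith) _)) (hnonneg s hs0.le)
          rw [Real.norm_eq_abs, abs_of_nonneg hnn]
          exact hbound s hs
        -- integral bound
        have hle1 : (∫ s in Ioo (0:ℝ) τ, (τ - s) ^ (-a) * (1 + s) ^ (-b) * h s) ≤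
            ∫ s in Ioo (0:ℝ) τ, K * (1 + τ) ^ (1 - b') * (τ - s) ^ (-a) :=
          setIntegral_mono_on hf_int hg_int measurableSet_Ioo hbound
        have hval : (∫ s in Ioo (0:ℝ) τ, K * (1 + τ) ^ (1 - b') * (τ - s) ^ (-a)) =
            K * (1 + τ) ^ (1 - b') * (τ ^ (1 - a) / (1 - a)) := by
          rw [integral_const_mul, aux_int' (-a) τ (by linarith) hτpos.le,
            show -a + 1 = 1 - a by ring]
        -- assemble
        have hmain := hineq τ hτpos.le
        have hint_le : C₂ * (∫ s in Ioo (0:ℝ) τ, (τ - s) ^ (-a) * (1 + s) ^ (-b) * h s) ≤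
            K / 2 * (1 + τ) := by
          have step1 : C₂ * (∫ s in Ioo (0:ℝ) τ, (τ - s) ^ (-a) * (1 + s) ^ (-b) * h s) ≤
              C₂ * (K * (1 + τ) ^ (1 - b') * (τ ^ (1 - a) / (1 - a))) := by
            rw [← hval]
            exact mul_le_mul_of_nonneg_left hle1 hC₂.le
          have p1 : τ ^ (1 - a) ≤ (1 + τ) ^ (1 - a) :=
            Real.rpow_le_rpow hτpos.le (by linarith) h1a.le
          have p2 : (1 + τ) ^ (1 - b') * (1 + τ) ^ (1 - a) = (1 + τ) ^ (2 - a - b') := by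
            rw [← Real.rpow_add h1τ]; ring_nf
          have p3 : (1 + τ) ^ (2 - a - b') = (1 + τ) * (1 + τ) ^ (1 - a - b') := by
            rw [show (2:ℝ) - a - b' = 1 + (1 - a - b') by ring, Real.rpow_add h1τ,
              Real.rpow_one]
          have p4 : C₂ / (1 - a) * (1 + τ) ^ (1 - a - b') ≤ 1 / 2 := hT τ hτT
          have hb'nn : (0:ℝ) ≤ (1 + τ) ^ (1 - b') := Real.rpow_nonneg h1τ.le _
          have step2 : C₂ * (K * (1 + τ) ^ (1 - b') * (τ ^ (1 - a) / (1 - a))) ≤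
              K / 2 * (1 + τ) := by
            have q1 : C₂ * (K * (1 + τ) ^ (1 - b') * (τ ^ (1 - a) / (1 - a))) ≤
                C₂ * (K * (1 + τ) ^ (1 - b') * ((1 + τ) ^ (1 - a) / (1 - a))) := by
              apply mul_le_mul_of_nonneg_left _ hC₂.le
              apply mul_le_mul_of_nonneg_left _ (mul_nonneg hK0 hb'nn)
              exact (div_le_div_iff_of_pos_right h1a).mpr p1
            have q2 : C₂ * (K * (1 + τ) ^ (1 - b') * ((1 + τ) ^ (1 - a) / (1 - a))) =
                K * (1 + τ) * (C₂ / (1 - a) * (1 + τ) ^ (1 - a - b')) := by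
              have e : C₂ * (K * (1 + τ) ^ (1 - b') * ((1 + τ) ^ (1 - a) / (1 - a))) =
                  K * ((1 + τ) ^ (1 - b') * (1 + τ) ^ (1 - a)) * (C₂ / (1 - a)) := by
                ring
              rw [e, p2, p3]; ring
            have q3 : K * (1 + τ) * (C₂ / (1 - a) * (1 + τ) ^ (1 - a - b')) ≤
                K * (1 + τ) * (1 / 2) :=
              mul_le_mul_of_nonneg_left p4 (mul_nonneg hK0 h1τ.le)
            calc C₂ * (K * (1 + τ) ^ (1 - b') * (τ ^ (1 - a) / (1 - a)))
                ≤ C₂ * (K * (1 + τ) ^ (1 - b') * ((1 + τ) ^ (1 - a) / (1 - a))) := q1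
              _ = K * (1 + τ) * (C₂ / (1 - a) * (1 + τ) ^ (1 - a - b')) := q2
              _ ≤ K * (1 + τ) * (1 / 2) := q3
              _ = K / 2 * (1 + τ) := by ring
          exact le_trans step1 step2
        have hhτ : h τ ≤ (C₁ + K / 2) * (1 + τ) := by
          calc h τ ≤ C₁ * (1 + τ) +
              C₂ * ∫ s in Ioo (0:ℝ) τ, (τ - s) ^ (-a) * (1 + s) ^ (-b) * h s := hmain
            _ ≤ C₁ * (1 + τ) + K / 2 * (1 + τ) := by linarith
            _ = (C₁ + K / 2) * (1 + τ) := by ring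
        rw [div_le_iff₀ h1τ]
        exact hhτ
    -- conclude
    have hKC : K ≤ C := by
      rcases max_cases M' (C₁ + K / 2) with ⟨heq, _⟩ | ⟨heq, _⟩
      · rw [heq] at hKey
        exact le_trans hKey (le_max_left _ _)
      · rw [heq] at hKey
        have : K ≤ 2 * C₁ := by linarith
        exact le_trans this (le_max_right _ _)
    have := hKb t₀ ⟨ht₀, le_refl _⟩
    have h1t : (0:ℝ) < 1 + t₀ := by linarith
    nlinarith
end

section
/- Let a ∈ (0,1), b > 0 with a + b = 1, and set K(a,b) = ∫₀¹ (1-s)^(-a) s^(-b) ds. If C₂ < 1/K(a,b) and h : [0,∞) → [0,∞) is locally bounded and satisfies h(t) ≤ C₁(1+t) + C₂ ∫₀ᵗ (t-τ)^(-a) τ^(-b) h(τ) dτ for all t ≥ 0, then h(t) ≤ (C₁/(1 - C₂ K(a,b)))(1+t) for all t ≥ 0. -/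
/-! Let `S` be the supremum of `h t / (1 + t)` over `[0, t₀]`, finite by local boundedness.
Since `a + b = 1`, the substitution `τ = t s` shows that the kernel `(t - τ)^(-a) τ^(-b)` has
mass exactly `K` on `(0, t)` for every `t > 0`, so inserting `h τ ≤ S (1 + t)` into the
integral inequality gives `S ≤ C₁ + C₂ K S`, i.e. `S ≤ C₁ / (1 - C₂ K)`. -/

open MeasureTheory Set

lemma sub_rpow_mul_rpow_nonneg {a b t τ : ℝ} (hτ : τ ∈ Ioo 0 t) :
    0 ≤ (t - τ) ^ (-a) * τ ^ (-b) :=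
  mul_nonneg (Real.rpow_nonneg (sub_nonneg.2 hτ.2.le) _) (Real.rpow_nonneg hτ.1.le _)

lemma integrableOn_Ioo_sub_rpow_mul_rpow {a b t : ℝ} (ha₀ : 0 ≤ a) (ha₁ : a < 1) (hb₀ : 0 ≤ b)
    (hb₁ : b < 1) : IntegrableOn (fun τ => (t - τ) ^ (-a) * τ ^ (-b)) (Ioo 0 t) := by
  rcases le_or_gt t 0 with ht | ht
  · simp [Ioo_eq_empty_of_le ht]
  have hleft : IntegrableOn (fun τ => τ ^ (-b)) (Ioo 0 t) :=
    (intervalIntegral.integrableOn_Ioo_rpow_iff ht).2 (by linarith)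
  have hright : IntegrableOn (fun τ => (t - τ) ^ (-a)) (Ioo 0 t) := by
    have := ((intervalIntegral.intervalIntegrable_rpow' (a := 0) (b := t)
      (show -1 < -a by linarith)).comp_sub_left t).symm
    rwa [sub_self, sub_zero, intervalIntegrable_iff_integrableOn_Ioo_of_le ht.le] at this
  -- whichever of `τ`, `t - τ` is at least `t / 2` has its power bounded by that of `t / 2`
  have hdom : ∀ τ ∈ Ioo 0 t, (t - τ) ^ (-a) * τ ^ (-b) ≤
      (t / 2) ^ (-a) * τ ^ (-b) + (t - τ) ^ (-a) * (t / 2) ^ (-b) := by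
    rintro τ ⟨hτ₀, hτt⟩
    have hfac₁ : 0 ≤ (t - τ) ^ (-a) := Real.rpow_nonneg (by linarith) _
    have hfac₂ : 0 ≤ τ ^ (-b) := Real.rpow_nonneg hτ₀.le _
    rcases le_total τ (t / 2) with hτ | hτ
    · have : (t - τ) ^ (-a) ≤ (t / 2) ^ (-a) :=
        Real.rpow_le_rpow_of_nonpos (by linarith) (by linarith) (by linarith)
      nlinarith [Real.rpow_nonneg (by linarith : (0:ℝ) ≤ t / 2) (-b)]
    · have : τ ^ (-b) ≤ (t / 2) ^ (-b) :=
        Real.rpow_le_rpow_of_nonpos (by linarith) hτ (by linarith)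
      nlinarith [Real.rpow_nonneg (by linarith : (0:ℝ) ≤ t / 2) (-a)]
  refine Integrable.mono' ((hleft.const_mul ((t / 2) ^ (-a))).add
    (hright.mul_const ((t / 2) ^ (-b))))
    (by fun_prop : Measurable fun τ : ℝ => (t - τ) ^ (-a) * τ ^ (-b)).aestronglyMeasurable
    (ae_restrict_of_forall_mem measurableSet_Ioo fun τ hτ => ?_)
  rw [Real.norm_of_nonneg (sub_rpow_mul_rpow_nonneg hτ)]
  exact hdom τ hτ

lemma setIntegral_Ioo_sub_rpow_mul_rpow {a b t : ℝ} (ht : 0 < t) :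
    ∫ τ in Ioo 0 t, (t - τ) ^ (-a) * τ ^ (-b) =
      t ^ (1 - a - b) * ∫ s in Ioo 0 1, (1 - s) ^ (-a) * s ^ (-b) := by
  have hscale : ∀ s ∈ uIcc (0:ℝ) 1, (t - t * s) ^ (-a) * (t * s) ^ (-b) =
      t ^ (-a - b) * ((1 - s) ^ (-a) * s ^ (-b)) := by
    intro s hs
    rw [uIcc_of_le zero_le_one] at hs
    rw [show t - t * s = t * (1 - s) by ring, Real.mul_rpow ht.le (by linarith [hs.2]),
      Real.mul_rpow ht.le hs.1, show -a - b = -a + -b by ring, Real.rpow_add ht]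
    ring
  have hpow : t * t ^ (-a - b) = t ^ (1 - a - b) := by
    rw [show 1 - a - b = 1 + (-a - b) by ring, Real.rpow_add ht, Real.rpow_one]
  have hsubst := intervalIntegral.smul_integral_comp_mul_left
    (fun τ => (t - τ) ^ (-a) * τ ^ (-b)) t (a := 0) (b := 1)
  rw [mul_zero, mul_one] at hsubst
  rw [← integral_Ioc_eq_integral_Ioo, ← integral_Ioc_eq_integral_Ioo,
    ← intervalIntegral.integral_of_le ht.le, ← intervalIntegral.integral_of_le zero_le_one,
    ← hsubst, intervalIntegral.integral_congr hscale, intervalIntegral.integral_const_mul,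
    smul_eq_mul, ← mul_assoc, hpow]

lemma setIntegral_Ioo_sub_rpow_mul_rpow_mul_le {a b t M : ℝ} {f : ℝ → ℝ} (ha₀ : 0 < a)
    (ha₁ : a < 1) (hab : a + b = 1) (ht : 0 ≤ t) (hM : 0 ≤ M)
    (hf₀ : ∀ τ ∈ Ioo 0 t, 0 ≤ f τ) (hfM : ∀ τ ∈ Ioo 0 t, f τ ≤ M) :
    ∫ τ in Ioo 0 t, (t - τ) ^ (-a) * τ ^ (-b) * f τ ≤
      (∫ s in Ioo 0 1, (1 - s) ^ (-a) * s ^ (-b)) * M := by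
  rcases ht.eq_or_lt with rfl | ht
  · rw [Ioo_self, Measure.restrict_empty, integral_zero_measure]
    exact mul_nonneg (setIntegral_nonneg measurableSet_Ioo fun s hs =>
      sub_rpow_mul_rpow_nonneg hs) hM
  calc ∫ τ in Ioo 0 t, (t - τ) ^ (-a) * τ ^ (-b) * f τ
      ≤ ∫ τ in Ioo 0 t, (t - τ) ^ (-a) * τ ^ (-b) * M :=
        setIntegral_mono_of_nonneg
          (fun τ hτ => mul_nonneg (sub_rpow_mul_rpow_nonneg hτ) (hf₀ τ hτ))
          (fun τ hτ => mul_le_mul_of_nonneg_left (hfM τ hτ) (sub_rpow_mul_rpow_nonneg hτ))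
          ((integrableOn_Ioo_sub_rpow_mul_rpow ha₀.le ha₁ (by linarith) (by linarith)).mul_const M)
    _ = (∫ s in Ioo 0 1, (1 - s) ^ (-a) * s ^ (-b)) * M := by
        rw [integral_mul_const, setIntegral_Ioo_sub_rpow_mul_rpow ht,
          show 1 - a - b = 0 by linarith, Real.rpow_zero, one_mul]

lemma le_div_one_sub_of_forall_le_add_mul {α : Type*} {s : Set α} {g : α → ℝ} {c θ : ℝ}
    (hθ : θ < 1) (hbdd : BddAbove (g '' s))
    (hstep : ∀ S, (∀ x ∈ s, g x ≤ S) → ∀ x ∈ s, g x ≤ c + θ * S) {x : α} (hx : x ∈ s) :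
    g x ≤ c / (1 - θ) := by
  set S := sSup (g '' s)
  have hS : ∀ y ∈ s, g y ≤ S := fun y hy => le_csSup hbdd (mem_image_of_mem g hy)
  have hSS : S ≤ c + θ * S :=
    csSup_le ⟨g x, mem_image_of_mem g hx⟩ (forall_mem_image.2 (hstep S hS))
  calc g x ≤ S := hS x hx
    _ ≤ c / (1 - θ) := by rw [le_div_iff₀ (by linarith)]; linarith

lemma le_mul_one_add_of_le_add_integral {a b C₁ C₂ S t : ℝ} {f : ℝ → ℝ} (ha₀ : 0 < a)
    (ha₁ : a < 1) (hab : a + b = 1) (hC₂ : 0 ≤ C₂) (ht : 0 ≤ t) (hS : 0 ≤ S)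
    (hf₀ : ∀ τ ∈ Ioo 0 t, 0 ≤ f τ) (hfS : ∀ τ ∈ Ioo 0 t, f τ ≤ S * (1 + τ))
    (hft : f t ≤ C₁ * (1 + t) + C₂ * ∫ τ in Ioo 0 t, (t - τ) ^ (-a) * τ ^ (-b) * f τ) :
    f t ≤ (C₁ + C₂ * (∫ s in Ioo 0 1, (1 - s) ^ (-a) * s ^ (-b)) * S) * (1 + t) := by
  have hconv := setIntegral_Ioo_sub_rpow_mul_rpow_mul_le (M := S * (1 + t)) ha₀ ha₁ hab ht
    (mul_nonneg hS (by linarith)) hf₀ fun τ hτ =>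
      (hfS τ hτ).trans (mul_le_mul_of_nonneg_left (by linarith [hτ.2]) hS)
  calc f t ≤ C₁ * (1 + t) + C₂ * ∫ τ in Ioo 0 t, (t - τ) ^ (-a) * τ ^ (-b) * f τ := hft
    _ ≤ C₁ * (1 + t) + C₂ * ((∫ s in Ioo 0 1, (1 - s) ^ (-a) * s ^ (-b)) * (S * (1 + t))) := by
        gcongr
    _ = _ := by ring

theorem gronwall_singular_critical_general
    (a b C₁ C₂ : ℝ) (ha : 0 < a) (ha1 : a < 1) (hab : a + b = 1)
    (hC₂ : 0 < C₂)
    (K : ℝ) (hK : K = ∫ s in Ioo (0:ℝ) 1, (1 - s) ^ (-a) * s ^ (-b))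
    (hsmall : C₂ < 1 / K)
    (h : ℝ → ℝ)
    (hnonneg : ∀ t, 0 ≤ t → 0 ≤ h t)
    (hloc : ∀ T : ℝ, 0 < T → ∃ M : ℝ, ∀ t ∈ Icc (0:ℝ) T, h t ≤ M)
    (hineq : ∀ t : ℝ, 0 ≤ t →
      h t ≤ C₁ * (1 + t) +
        C₂ * ∫ τ in Ioo (0:ℝ) t, (t - τ) ^ (-a) * τ ^ (-b) * h τ) :
    ∀ t : ℝ, 0 ≤ t → h t ≤ (C₁ / (1 - C₂ * K)) * (1 + t) := by
  have hK₀ : 0 < K := by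
    by_contra! hK₀
    linarith [one_div_nonpos.2 hK₀]
  have hθ : C₂ * K < 1 := (lt_div_iff₀ hK₀).1 hsmall
  intro t₀ ht₀
  obtain ⟨M, hM⟩ := hloc (t₀ + 1) (by linarith)
  have hbdd : BddAbove ((fun t => h t / (1 + t)) '' Icc 0 t₀) :=
    ⟨M, forall_mem_image.2 fun t ht => (div_le_self (hnonneg t ht.1) (by linarith [ht.1])).trans
      (hM t ⟨ht.1, by linarith [ht.2]⟩)⟩
  have hstep : ∀ S, (∀ t ∈ Icc 0 t₀, h t / (1 + t) ≤ S) →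
      ∀ t ∈ Icc 0 t₀, h t / (1 + t) ≤ C₁ + C₂ * K * S := by
    intro S hS t ht
    have hS₀ : 0 ≤ S := by
      have h0 := hS 0 ⟨le_rfl, ht₀⟩
      rw [add_zero, div_one] at h0
      exact (hnonneg 0 le_rfl).trans h0
    rw [div_le_iff₀ (by linarith [ht.1]), hK]
    exact le_mul_one_add_of_le_add_integral ha ha1 hab hC₂.le ht.1 hS₀
      (fun τ hτ => hnonneg τ hτ.1.le)
      (fun τ hτ => (div_le_iff₀ (by linarith [hτ.1])).1 (hS τ ⟨hτ.1.le, hτ.2.le.trans ht.2⟩))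
      (hineq t ht.1)
  calc h t₀ = h t₀ / (1 + t₀) * (1 + t₀) := by field_simp
    _ ≤ C₁ / (1 - C₂ * K) * (1 + t₀) := mul_le_mul_of_nonneg_right
        (le_div_one_sub_of_forall_le_add_mul (g := fun t => h t / (1 + t)) hθ hbdd hstep
          ⟨ht₀, le_rfl⟩) (by linarith)

theorem gronwall_singular_critical
    (a b C₁ C₂ : ℝ) (ha : 0 < a) (ha1 : a < 1) (hb : 0 < b) (hab : a + b = 1)
    (hC₁ : 0 < C₁) (hC₂ : 0 < C₂)
    (K : ℝ) (hK : K = ∫ s in Ioo (0:ℝ) 1, (1 - s) ^ (-a) * s ^ (-b))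
    (hsmall : C₂ < 1 / K)
    (h : ℝ → ℝ)
    (hmeas : Measurable h)
    (hnonneg : ∀ t, 0 ≤ t → 0 ≤ h t)
    (hloc : ∀ T : ℝ, 0 < T → ∃ M : ℝ, ∀ t ∈ Icc (0:ℝ) T, h t ≤ M)
    (hineq : ∀ t : ℝ, 0 ≤ t →
      h t ≤ C₁ * (1 + t) +
        C₂ * ∫ τ in Ioo (0:ℝ) t, (t - τ) ^ (-a) * τ ^ (-b) * h τ) :
    ∀ t : ℝ, 0 ≤ t → h t ≤ (C₁ / (1 - C₂ * K)) * (1 + t) :=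
  gronwall_singular_critical_general a b C₁ C₂ ha ha1 hab hC₂ K hK hsmall h hnonneg hloc hineq
end

section
/- Let d ≥ 1, θ > 0, and let k : ℝᵈ → ℝᵈ be an integrable vector field with ∫_{B_R} k(y) dy = 0 for all R > 0, ∫ |y| |k(y)| dy =: A < ∞, and |k(y)| ≤ B |y|^(-(θ+d+1)) for all y ≠ 0. Suppose v ∈ L¹(ℝᵈ) is Lipschitz with |∇v(x)| ≤ L(1+|x|)^(-(θ+1)) a.e. Then there exists C > 0 (independent of v, k) such that |∫ k(y) v(x-y) dy| ≤ C (A·L + B·‖v‖_{L¹}) |x|^(-(θ+1)) for all |x| ≥ 1. -/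
/-!
Split `∫ k(y) v(x - y) dy` at `|y| = |x|/2`. On the inner ball the vanishing mean of `k` lets us
replace `v(x - y)` by `v(x - y) - v(x)`, which the mean value inequality bounds by
`L (1 + |x|/2)^(-(θ+1)) |y|`, since the whole segment from `x` to `x - y` stays at distance at least
`|x|/2` from the origin; this costs `A`. On the outer region `|k(y)| ≤ B (|x|/2)^(-(θ+d+1))`,
which costs `‖v‖₁`. Both powers of `|x|/2` are at most `2^(θ+d+1) |x|^(-(θ+1))` for `|x| ≥ 1`.
-/

open MeasureTheory Set Metric Filter Topology
open scoped NNReal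

section MeanValue

variable {E : Type*} [NormedAddCommGroup E] [NormedSpace ℝ E] [FiniteDimensional ℝ E]
  [MeasurableSpace E] [BorelSpace E] {μ : Measure E} [μ.IsAddHaarMeasure] {v : E → ℝ} {K : ℝ≥0}

namespace LipschitzWith

lemma integrableOn_ball_comp_sub_left (hv : LipschitzWith K v) (w : E) (ε : ℝ) :
    IntegrableOn (fun s => v (w - s)) (ball (0 : E) ε) μ :=
  ((hv.continuous.comp (continuous_sub_left w)).locallyIntegrable.integrableOn_isCompact
    (isCompact_closedBall 0 ε)).mono_set ball_subset_closedBall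

lemma abs_setIntegral_ball_comp_sub_left_sub_mul_le (hv : LipschitzWith K v) (w : E) (ε : ℝ) :
    |∫ s in ball (0 : E) ε, v (w - s) ∂μ - μ.real (ball 0 ε) * v w|
      ≤ K * ε * μ.real (ball 0 ε) := by
  rw [← Real.norm_eq_abs, ← smul_eq_mul, ← setIntegral_const,
    ← integral_sub (hv.integrableOn_ball_comp_sub_left w ε)
      (integrableOn_const (measure_ball_lt_top (μ := μ)).ne)]
  refine norm_setIntegral_le_of_norm_le_const (measure_ball_lt_top (μ := μ)) fun s hs => ?_
  calc ‖v (w - s) - v w‖ ≤ K * ‖(w - s) - w‖ := hv.norm_sub_le _ _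
    _ ≤ K * ε := by
      rw [sub_sub_cancel_left, norm_neg]
      exact mul_le_mul_of_nonneg_left (mem_ball_zero_iff.1 hs).le K.coe_nonneg

lemma hasDerivAt_setIntegral_ball_comp_add_smul_sub (hv : LipschitzWith K v) (a u : E)
    (ε t : ℝ) :
    HasDerivAt (fun t : ℝ => ∫ s in ball (0 : E) ε, v (a + t • u - s) ∂μ)
      (∫ s in ball (0 : E) ε, fderiv ℝ v (a + t • u - s) u ∂μ) t := by
  have hline_lip : ∀ s, LipschitzWith (K * ‖u‖₊) fun t : ℝ => v (a + t • u - s) :=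
    fun s => LipschitzWith.of_dist_le_mul fun t t' => by
      rw [dist_eq_norm, Real.dist_eq]
      calc ‖v (a + t • u - s) - v (a + t' • u - s)‖
          ≤ K * ‖(a + t • u - s) - (a + t' • u - s)‖ := hv.norm_sub_le _ _
        _ = (K * ‖u‖₊ : ℝ≥0) * |t - t'| := by
          rw [show (a + t • u - s) - (a + t' • u - s) = (t - t') • u by module, norm_smul,
            Real.norm_eq_abs]
          push_cast
          ring
  have hdiff : ∀ᵐ s ∂μ, DifferentiableAt ℝ v (a + t • u - s) :=
    (Measure.measurePreserving_sub_left μ _).quasiMeasurePreserving.ae hv.ae_differentiableAt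
  refine (hasDerivAt_integral_of_dominated_loc_of_lip (bound := fun _ => ((K * ‖u‖₊ : ℝ≥0) : ℝ))
    univ_mem (Eventually.of_forall fun t' =>
      (hv.integrableOn_ball_comp_sub_left (a + t' • u) ε).aestronglyMeasurable)
    (hv.integrableOn_ball_comp_sub_left _ ε)
    ((measurable_fderiv_apply_const ℝ v u).comp
      (measurable_const.sub measurable_id)).aestronglyMeasurable.restrict
    (Eventually.of_forall fun s => ?_) (integrableOn_const measure_ball_lt_top.ne)
    (ae_restrict_of_ae ?_)).2
  · rw [Real.nnabs_coe]
    exact (hline_lip s).lipschitzOnWith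
  · filter_upwards [hdiff] with s hs
    have hline : HasDerivAt (fun τ : ℝ => a + τ • u - s) u t := by
      simpa using (((hasDerivAt_id t).smul_const u).const_add a).sub_const s
    exact hs.hasFDerivAt.comp_hasDerivAt t hline

/- `v` is differentiable only almost everywhere, so the one-variable mean value inequality is
applied to the averages of `v` over small balls centred on the segment instead. -/
lemma abs_setIntegral_ball_comp_sub_left_sub_le_of_ae_norm_fderiv_le (hv : LipschitzWith K v)
    {ε M : ℝ} {a b : E} (hM : ∀ᵐ w ∂μ, w ∈ thickening ε (segment ℝ a b) → ‖fderiv ℝ v w‖ ≤ M) :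
    |∫ s in ball (0 : E) ε, v (b - s) ∂μ - ∫ s in ball (0 : E) ε, v (a - s) ∂μ|
      ≤ M * ‖b - a‖ * μ.real (ball 0 ε) := by
  set u := b - a
  have hderiv_le : ∀ t ∈ Ico (0 : ℝ) 1,
      ‖∫ s in ball (0 : E) ε, fderiv ℝ v (a + t • u - s) u ∂μ‖ ≤ M * ‖u‖ * μ.real (ball 0 ε) := by
    intro t ht
    refine norm_setIntegral_le_of_norm_le_const_ae measure_ball_lt_top
      ((ae_restrict_iff' measurableSet_ball).2 ?_)
    filter_upwards [(Measure.measurePreserving_sub_left μ (a + t • u)).quasiMeasurePreserving.ae hM]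
      with s hs hs_ball
    have hmem : a + t • u - s ∈ thickening ε (segment ℝ a b) := by
      refine mem_thickening_iff.2 ⟨a + t • u, ?_, ?_⟩
      · rw [segment_eq_image']
        exact ⟨t, Ico_subset_Icc_self ht, rfl⟩
      · simpa [dist_eq_norm] using hs_ball
    calc ‖fderiv ℝ v (a + t • u - s) u‖ ≤ ‖fderiv ℝ v (a + t • u - s)‖ * ‖u‖ :=
          (fderiv ℝ v _).le_opNorm u
      _ ≤ M * ‖u‖ := mul_le_mul_of_nonneg_right (hs hmem) (norm_nonneg u)
  have := norm_image_sub_le_of_norm_deriv_le_segment'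
    (fun t _ => (hv.hasDerivAt_setIntegral_ball_comp_add_smul_sub a u ε t).hasDerivWithinAt)
    hderiv_le 1 (right_mem_Icc.2 zero_le_one)
  simpa [u] using this

theorem abs_sub_le_of_ae_norm_fderiv_le (hv : LipschitzWith K v) {U : Set E} (hU : IsOpen U)
    {M : ℝ} (hM : ∀ᵐ w ∂μ, w ∈ U → ‖fderiv ℝ v w‖ ≤ M) {a b : E} (hab : segment ℝ a b ⊆ U) :
    |v b - v a| ≤ M * ‖b - a‖ := by
  have hcompact : IsCompact (segment ℝ a b) := by
    rw [segment_eq_image']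
    exact isCompact_Icc.image (by fun_prop)
  obtain ⟨δ, hδ, hδU⟩ := hcompact.exists_thickening_subset_open hU hab
  have key : ∀ ε ∈ Ioo 0 δ, |v b - v a| ≤ M * ‖b - a‖ + 2 * K * ε := by
    rintro ε ⟨hε, hεδ⟩
    set c := μ.real (ball (0 : E) ε)
    have hc : 0 < c := ENNReal.toReal_pos (measure_ball_pos μ 0 hε).ne' measure_ball_lt_top.ne
    have hb := hv.abs_setIntegral_ball_comp_sub_left_sub_mul_le (μ := μ) b ε
    have ha := hv.abs_setIntegral_ball_comp_sub_left_sub_mul_le (μ := μ) a ε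
    have hsmooth := hv.abs_setIntegral_ball_comp_sub_left_sub_le_of_ae_norm_fderiv_le
      (a := a) (b := b) (ε := ε) (hM.mono fun w hw hwε => hw (hδU (thickening_mono hεδ.le _ hwε)))
    refine le_of_mul_le_mul_left ?_ hc
    calc c * |v b - v a| = |c * (v b - v a)| := by rw [abs_mul, abs_of_pos hc]
      _ = |(∫ s in ball (0 : E) ε, v (a - s) ∂μ - c * v a)
            - (∫ s in ball (0 : E) ε, v (b - s) ∂μ - c * v b)
            + (∫ s in ball (0 : E) ε, v (b - s) ∂μ - ∫ s in ball (0 : E) ε, v (a - s) ∂μ)| := by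
          congr 1
          ring
      _ ≤ K * ε * c + K * ε * c + M * ‖b - a‖ * c := by
          grw [abs_add_le, abs_sub _ _, ha, hb, hsmooth]
      _ = c * (M * ‖b - a‖ + 2 * K * ε) := by ring
  have hlim : Tendsto (fun ε => M * ‖b - a‖ + 2 * K * ε) (𝓝[>] 0) (𝓝 (M * ‖b - a‖)) := by
    have : Continuous fun ε : ℝ => M * ‖b - a‖ + 2 * K * ε := by fun_prop
    simpa using (this.tendsto 0).mono_left nhdsWithin_le_nhds
  exact ge_of_tendsto hlim (eventually_of_mem (Ioo_mem_nhdsGT hδ) key)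

theorem abs_sub_le_of_ae_norm_fderiv_le_mul_rpow (hv : LipschitzWith K v) {L p : ℝ} (hL : 0 ≤ L)
    (hp : 0 ≤ p) (hφ : ∀ᵐ w ∂μ, ‖fderiv ℝ v w‖ ≤ L * (1 + ‖w‖) ^ (-p)) {x y : E}
    (hy : ‖y‖ < ‖x‖ / 2) :
    |v (x - y) - v x| ≤ L * (1 + ‖x‖ / 2) ^ (-p) * ‖y‖ := by
  have hxy : x - y ∈ ball x (‖x‖ / 2) := by simpa [dist_eq_norm] using hy
  have hM : ∀ᵐ w ∂μ, w ∈ ball x (‖x‖ / 2) → ‖fderiv ℝ v w‖ ≤ L * (1 + ‖x‖ / 2) ^ (-p) := by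
    filter_upwards [hφ] with w hw hwx
    have hxw : ‖x‖ / 2 ≤ ‖w‖ := by
      have := norm_sub_norm_le x w
      rw [mem_ball, dist_eq_norm, norm_sub_rev] at hwx
      linarith
    exact hw.trans (mul_le_mul_of_nonneg_left
      (Real.rpow_le_rpow_of_nonpos (by positivity) (by linarith) (neg_nonpos.2 hp)) hL)
  simpa using hv.abs_sub_le_of_ae_norm_fderiv_le isOpen_ball hM
    ((convex_ball x _).segment_subset (mem_ball_self ((norm_nonneg y).trans_lt hy)) hxy)

end LipschitzWith

end MeanValue

section Kernel

variable {E F : Type*} [NormedAddCommGroup E] [MeasurableSpace E] {μ : Measure E}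
  [NormedAddCommGroup F] [NormedSpace ℝ F] {k : E → F} {v : E → ℝ}

theorem LipschitzWith.integrable_comp_sub_smul [BorelSpace E] {K : ℝ≥0} (hv : LipschitzWith K v)
    (hk : Integrable k μ) (hk₁ : Integrable (fun y => ‖y‖ * ‖k y‖) μ) (x : E) :
    Integrable (fun y => v (x - y) • k y) μ := by
  refine ((hk.norm.const_mul |v x|).add (hk₁.const_mul K)).mono'
    ((hv.continuous.comp (continuous_sub_left x)).aestronglyMeasurable.smul hk.1)
    (Eventually.of_forall fun y => ?_)
  have hvy : |v (x - y)| ≤ |v x| + K * ‖y‖ := by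
    have := hv.norm_sub_le (x - y) x
    rw [sub_sub_cancel_left, norm_neg, Real.norm_eq_abs] at this
    linarith [abs_sub_abs_le_abs_sub (v (x - y)) (v x)]
  calc ‖v (x - y) • k y‖ = |v (x - y)| * ‖k y‖ := by rw [norm_smul, Real.norm_eq_abs]
    _ ≤ (|v x| + K * ‖y‖) * ‖k y‖ := by gcongr
    _ = |v x| * ‖k y‖ + K * (‖y‖ * ‖k y‖) := by ring

theorem integral_comp_sub_smul_eq_of_setIntegral_eq_zero {S : Set E} (hS : MeasurableSet S)
    (hk : Integrable k μ) (hkS : ∫ y in S, k y ∂μ = 0) {x : E}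
    (hvk : Integrable (fun y => v (x - y) • k y) μ) :
    ∫ y, v (x - y) • k y ∂μ
      = ∫ y in S, (v (x - y) - v x) • k y ∂μ + ∫ y in Sᶜ, v (x - y) • k y ∂μ := by
  have hkx : Integrable (fun y => v x • k y) μ := hk.smul (v x)
  simp_rw [sub_smul]
  rw [integral_sub hvk.integrableOn hkx.integrableOn, integral_smul, hkS, smul_zero,
    sub_zero, integral_add_compl hS hvk]

theorem norm_setIntegral_sub_smul_le {S : Set E} (hS : MeasurableSet S) {x : E} {M : ℝ}
    (hM₀ : 0 ≤ M) (hM : ∀ y ∈ S, |v (x - y) - v x| ≤ M * ‖y‖)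
    (hk₁ : Integrable (fun y => ‖y‖ * ‖k y‖) μ) :
    ‖∫ y in S, (v (x - y) - v x) • k y ∂μ‖ ≤ M * ∫ y, ‖y‖ * ‖k y‖ ∂μ := by
  calc ‖∫ y in S, (v (x - y) - v x) • k y ∂μ‖
      ≤ ∫ y in S, M * (‖y‖ * ‖k y‖) ∂μ := by
        refine norm_integral_le_of_norm_le (hk₁.const_mul M).integrableOn
          (ae_restrict_of_forall_mem hS fun y hy => ?_)
        rw [norm_smul, Real.norm_eq_abs, ← mul_assoc]
        exact mul_le_mul_of_nonneg_right (hM y hy) (norm_nonneg _)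
    _ ≤ ∫ y, M * (‖y‖ * ‖k y‖) ∂μ :=
        setIntegral_le_integral (hk₁.const_mul M) (Eventually.of_forall fun y => by positivity)
    _ = M * ∫ y, ‖y‖ * ‖k y‖ ∂μ := integral_const_mul M _

theorem norm_setIntegral_comp_sub_smul_le [MeasurableAdd E] [MeasurableNeg E]
    [μ.IsAddLeftInvariant] [μ.IsNegInvariant] {S : Set E} {x : E} {N : ℝ} (hN₀ : 0 ≤ N)
    (hN : ∀ y ∈ S, ‖k y‖ ≤ N) (hS : MeasurableSet S) (hv : Integrable v μ) :
    ‖∫ y in S, v (x - y) • k y ∂μ‖ ≤ N * ∫ y, |v y| ∂μ := by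
  have hvx : Integrable (fun y => N * |v (x - y)|) μ := (hv.comp_sub_left x).abs.const_mul N
  calc ‖∫ y in S, v (x - y) • k y ∂μ‖ ≤ ∫ y in S, N * |v (x - y)| ∂μ := by
        refine norm_integral_le_of_norm_le hvx.integrableOn
          (ae_restrict_of_forall_mem hS fun y hy => ?_)
        rw [norm_smul, Real.norm_eq_abs, mul_comm]
        exact mul_le_mul_of_nonneg_right (hN y hy) (abs_nonneg _)
    _ ≤ ∫ y, N * |v (x - y)| ∂μ :=
        setIntegral_le_integral hvx (Eventually.of_forall fun y => by positivity)
    _ = N * ∫ y, |v y| ∂μ := by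
        rw [integral_const_mul, integral_sub_left_eq_self (fun y => |v y|) μ x]

theorem norm_integral_comp_sub_smul_le [BorelSpace E] [μ.IsAddLeftInvariant] [μ.IsNegInvariant]
    {K : ℝ≥0} (hlip : LipschitzWith K v)
    (hv : Integrable v μ) (hk : Integrable k μ) (hk₁ : Integrable (fun y => ‖y‖ * ‖k y‖) μ)
    {R : ℝ} (hkR : ∫ y in ball 0 R, k y ∂μ = 0) {x : E} {M N : ℝ} (hM₀ : 0 ≤ M)
    (hM : ∀ y ∈ ball 0 R, |v (x - y) - v x| ≤ M * ‖y‖) (hN₀ : 0 ≤ N)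
    (hN : ∀ y ∈ (ball 0 R)ᶜ, ‖k y‖ ≤ N) :
    ‖∫ y, v (x - y) • k y ∂μ‖ ≤ M * (∫ y, ‖y‖ * ‖k y‖ ∂μ) + N * ∫ y, |v y| ∂μ := by
  rw [integral_comp_sub_smul_eq_of_setIntegral_eq_zero measurableSet_ball hk hkR
    (hlip.integrable_comp_sub_smul hk hk₁ x)]
  exact (norm_add_le _ _).trans
    (add_le_add (norm_setIntegral_sub_smul_le measurableSet_ball hM₀ hM hk₁)
      (norm_setIntegral_comp_sub_smul_le hN₀ hN measurableSet_ball.compl hv))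

end Kernel

lemma half_rpow_neg_le_two_rpow_mul {r p q s : ℝ} (hr : 1 ≤ r) (hps : p ≤ s) (hsq : s ≤ q) :
    (r / 2) ^ (-s) ≤ 2 ^ q * r ^ (-p) := by
  have hr₀ : 0 < r := by linarith
  rw [Real.div_rpow hr₀.le zero_le_two, Real.rpow_neg zero_le_two, div_inv_eq_mul, mul_comm]
  gcongr
  norm_num

theorem cancellation_kernel_estimate_general
    (d : ℕ) (θ : ℝ) (hθ : 0 < θ) :
    ∃ C : ℝ, 0 < C ∧
      ∀ (k : EuclideanSpace ℝ (Fin d) → EuclideanSpace ℝ (Fin d))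
        (v : EuclideanSpace ℝ (Fin d) → ℝ) (A B L : ℝ),
        Integrable k →
        (∀ R : ℝ, 0 < R → (∫ y in Metric.ball (0 : EuclideanSpace ℝ (Fin d)) R, k y) = 0) →
        Integrable (fun y => ‖y‖ * ‖k y‖) →
        A = (∫ y, ‖y‖ * ‖k y‖) →
        (∀ y : EuclideanSpace ℝ (Fin d), y ≠ 0 → ‖k y‖ ≤ B * ‖y‖ ^ (-(θ + d + 1))) →
        Integrable v →
        (∃ Lip : NNReal, LipschitzWith Lip v) →
        (∀ᵐ x : EuclideanSpace ℝ (Fin d), ‖fderiv ℝ v x‖ ≤ L * (1 + ‖x‖) ^ (-(θ + 1))) →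
        ∀ x : EuclideanSpace ℝ (Fin d), 1 ≤ ‖x‖ →
          ‖∫ y, v (x - y) • k y‖ ≤ C * (A * L + B * (∫ y, |v y|)) * ‖x‖ ^ (-(θ + 1)) := by
  refine ⟨2 ^ (θ + d + 1), by positivity, ?_⟩
  rintro k v A B L hk hcancel hk₁ rfl hB hv ⟨K, hlip⟩ hφ x hx
  have hR : 0 < ‖x‖ / 2 := by positivity
  have hd₀ : (0 : ℝ) ≤ d := d.cast_nonneg
  have hL₀ : 0 ≤ L := by
    obtain ⟨w, hw⟩ := hφ.exists
    exact nonneg_of_mul_nonneg_left ((norm_nonneg _).trans hw) (by positivity)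
  have hB₀ : 0 ≤ B :=
    nonneg_of_mul_nonneg_left ((norm_nonneg _).trans (hB x (norm_pos_iff.1 (by linarith))))
      (by positivity)
  have hk_far : ∀ y ∈ (ball 0 (‖x‖ / 2))ᶜ, ‖k y‖ ≤ B * (‖x‖ / 2) ^ (-(θ + d + 1)) := by
    intro y hy
    have hRy : ‖x‖ / 2 ≤ ‖y‖ := by simpa using hy
    grw [hB y (norm_pos_iff.1 (hR.trans_le hRy)),
      Real.rpow_le_rpow_of_nonpos hR hRy (by linarith)]
  have hsplit := norm_integral_comp_sub_smul_le hlip hv hk hk₁ (hcancel _ hR) (by positivity)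
    (fun y hy => hlip.abs_sub_le_of_ae_norm_fderiv_le_mul_rpow hL₀ (by linarith) hφ
      (mem_ball_zero_iff.1 hy)) (by positivity) hk_far
  have hnear_pow : (1 + ‖x‖ / 2) ^ (-(θ + 1)) ≤ 2 ^ (θ + d + 1) * ‖x‖ ^ (-(θ + 1)) :=
    (Real.rpow_le_rpow_of_nonpos hR (by linarith) (by linarith)).trans
      (half_rpow_neg_le_two_rpow_mul hx le_rfl (by linarith))
  have hfar_pow : (‖x‖ / 2) ^ (-(θ + d + 1)) ≤ 2 ^ (θ + d + 1) * ‖x‖ ^ (-(θ + 1)) :=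
    half_rpow_neg_le_two_rpow_mul hx (by linarith) le_rfl
  have hA₀ : 0 ≤ ∫ y, ‖y‖ * ‖k y‖ := integral_nonneg fun y => by positivity
  have hv₀ : 0 ≤ ∫ y, |v y| := integral_nonneg fun y => by positivity
  calc _ ≤ _ := hsplit
    _ ≤ L * (2 ^ (θ + d + 1) * ‖x‖ ^ (-(θ + 1))) * (∫ y, ‖y‖ * ‖k y‖)
        + B * (2 ^ (θ + d + 1) * ‖x‖ ^ (-(θ + 1))) * ∫ y, |v y| :=
        add_le_add (mul_le_mul_of_nonneg_right (mul_le_mul_of_nonneg_left hnear_pow hL₀) hA₀)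
          (mul_le_mul_of_nonneg_right (mul_le_mul_of_nonneg_left hfar_pow hB₀) hv₀)
    _ = _ := by ring

theorem cancellation_kernel_estimate
    (d : ℕ) (hd : 1 ≤ d) (θ : ℝ) (hθ : 0 < θ) :
    ∃ C : ℝ, 0 < C ∧
      ∀ (k : EuclideanSpace ℝ (Fin d) → EuclideanSpace ℝ (Fin d))
        (v : EuclideanSpace ℝ (Fin d) → ℝ) (A B L : ℝ),
        Integrable k →
        (∀ R : ℝ, 0 < R → (∫ y in Metric.ball (0 : EuclideanSpace ℝ (Fin d)) R, k y) = 0) →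
        Integrable (fun y => ‖y‖ * ‖k y‖) →
        A = (∫ y, ‖y‖ * ‖k y‖) →
        (∀ y : EuclideanSpace ℝ (Fin d), y ≠ 0 → ‖k y‖ ≤ B * ‖y‖ ^ (-(θ + d + 1))) →
        Integrable v →
        (∃ Lip : NNReal, LipschitzWith Lip v) →
        (∀ᵐ x : EuclideanSpace ℝ (Fin d), ‖fderiv ℝ v x‖ ≤ L * (1 + ‖x‖) ^ (-(θ + 1))) →
        ∀ x : EuclideanSpace ℝ (Fin d), 1 ≤ ‖x‖ →
          ‖∫ y, v (x - y) • k y‖ ≤ C * (A * L + B * (∫ y, |v y|)) * ‖x‖ ^ (-(θ + 1)) :=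
  cancellation_kernel_estimate_general d θ hθ
end
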